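/- For every integer k ≥ 1 there exists a constant C_k > 0 with the following property: for every integer m ≥ 1 and every polynomial function Q : ℝ^m → ℝ satisfying the eigenfunction equation ΔQ(x) − ⟨x, ∇Q(x)⟩ = −k·Q(x) for all x ∈ ℝ^m and the normalization ∫_{ℝ^m} Q² dγ_m = 1, if N is a standard Gaussian vector in ℝ^m then d_TV( Q(N), N(0,1) ) ≤ C_k · √( Var( |∇Q(N)|² ) ). -/

import Mathlib

open MeasureTheory ProbabilityTheory Filter Real Topology

noncomputable section

/-- Total variation distance between the laws `μ`, `ν` of two real random variables:
`sup_{A Borel} |μ(A) - ν(A)|`. -/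
def dTV (μ ν : Measure ℝ) : ℝ :=
  ⨆ s : {s : Set ℝ // MeasurableSet s}, |(μ s).toReal - (ν s).toReal|

open Set
open scoped ENNReal NNReal


lemma master_bound (n : ℕ) (t : ℝ) :
    (1+|t|)^n * rexp (-t^2/2) ≤ rexp ((n:ℝ)^2) * rexp (-t^2/4) := by
  have h1 : (1+|t|)^n ≤ rexp ((n:ℝ) * |t|) := by
    calc (1+|t|)^n ≤ (rexp |t|)^n := by
          apply pow_le_pow_left₀ (by positivity)
          linarith [Real.add_one_le_exp |t|]
      _ = rexp ((n:ℝ) * |t|) := by rw [← Real.exp_nat_mul]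
  have h2 : (n:ℝ) * |t| ≤ (n:ℝ)^2 + t^2/4 := by
    nlinarith [sq_nonneg ((n:ℝ) - |t|/2), sq_abs t]
  calc (1+|t|)^n * rexp (-t^2/2) ≤ rexp ((n:ℝ)*|t|) * rexp (-t^2/2) := by
        apply mul_le_mul_of_nonneg_right h1 (le_of_lt (Real.exp_pos _))
    _ = rexp ((n:ℝ)*|t| - t^2/2) := by rw [← Real.exp_add]; ring_nf
    _ ≤ rexp ((n:ℝ)^2 - t^2/4) := by apply Real.exp_le_exp.2; linarith
    _ = rexp ((n:ℝ)^2) * rexp (-t^2/4) := by rw [← Real.exp_add]; ring_nf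

lemma master_integrable (n : ℕ) :
    Integrable (fun t : ℝ => (1+|t|)^n * rexp (-t^2/2)) := by
  have h : Integrable (fun t : ℝ => rexp ((n:ℝ)^2) * rexp (-(1/4) * t^2)) :=
    (integrable_exp_neg_mul_sq (by norm_num)).const_mul _
  refine h.mono' ?_ ?_
  · exact ((continuous_const.add continuous_abs).pow n |>.mul
      (((continuous_pow 2).neg.div_const 2).rexp)).aestronglyMeasurable
  · filter_upwards with t
    rw [Real.norm_eq_abs, abs_of_nonneg (by positivity)]
    have := master_bound n t
    calc (1+|t|)^n * rexp (-t^2/2) ≤ rexp ((n:ℝ)^2) * rexp (-t^2/4) := this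
      _ = rexp ((n:ℝ)^2) * rexp (-(1/4) * t^2) := by ring_nf

lemma master_tendsto_aux (n : ℕ) :
    Tendsto (fun t : ℝ => (1+|t|)^n * rexp (-t^2/2)) atTop (𝓝 0) := by
  have hb : Tendsto (fun t : ℝ => rexp ((n:ℝ)^2) * rexp (-t^2/4)) atTop (𝓝 0) := by
    rw [show (0:ℝ) = rexp ((n:ℝ)^2) * 0 by ring]
    apply Tendsto.const_mul
    apply Real.tendsto_exp_atBot.comp
    have h1 : Tendsto (fun t : ℝ => t^2/4) atTop atTop :=
      (tendsto_pow_atTop two_ne_zero).atTop_div_const (by norm_num)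
    have := tendsto_neg_atTop_atBot.comp h1
    apply this.congr (fun t => by simp [neg_div])
  apply tendsto_of_tendsto_of_tendsto_of_le_of_le tendsto_const_nhds hb
  · intro t; positivity
  · intro t; exact master_bound n t

lemma master_tendsto_atBot (n : ℕ) :
    Tendsto (fun t : ℝ => (1+|t|)^n * rexp (-t^2/2)) atBot (𝓝 0) := by
  have := (master_tendsto_aux n).comp tendsto_abs_atBot_atTop
  apply this.congr (fun t => by simp [Function.comp, abs_abs, sq_abs])

lemma master_tendsto_atTop (n : ℕ) :
    Tendsto (fun t : ℝ => (1+|t|)^n * rexp (-t^2/2)) atTop (𝓝 0) :=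
  master_tendsto_aux n


lemma gaussianPDFReal_eq (t : ℝ) :
    gaussianPDFReal 0 1 t = (√(2*π))⁻¹ * rexp (-t^2/2) := by
  simp [gaussianPDFReal]

lemma gauss_integral_eq (h : ℝ → ℝ) :
    ∫ t, h t ∂(gaussianReal 0 1) = ∫ t, gaussianPDFReal 0 1 t * h t := by
  rw [gaussianReal_of_var_ne_zero 0 one_ne_zero]
  have hd : (gaussianPDF 0 1) = fun x => ((gaussianPDFReal 0 1 x).toNNReal : ℝ≥0∞) := by
    funext x; rfl
  rw [hd, integral_withDensity_eq_integral_smul]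
  · congr 1; funext x
    simp [NNReal.smul_def, Real.coe_toNNReal _ (gaussianPDFReal_nonneg 0 1 x)]
  · exact (measurable_gaussianPDFReal 0 1).real_toNNReal

lemma deriv_exp_neg_sq (t : ℝ) :
    HasDerivAt (fun s : ℝ => rexp (-s^2/2)) (-t * rexp (-t^2/2)) t := by
  have h1 : HasDerivAt (fun s : ℝ => -s^2/2) (-t) t := by
    have := ((hasDerivAt_pow 2 t).neg.div_const 2)
    exact this.congr_deriv (by push_cast; ring)
  simpa [mul_comm] using h1.exp

lemma ibp1d (u u' : ℝ → ℝ) (hu : ∀ t, HasDerivAt u (u' t) t) (hu'c : Continuous u')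
    (c : ℝ) (n : ℕ) (hb : ∀ t, |u t| ≤ c*(1+|t|)^n) (hb' : ∀ t, |u' t| ≤ c*(1+|t|)^n) :
    ∫ t, t * u t ∂(gaussianReal 0 1) = ∫ t, u' t ∂(gaussianReal 0 1) := by
  have huc : Continuous u := by
    apply continuous_iff_continuousAt.2 (fun t => (hu t).continuousAt)
  have hc : 0 ≤ c := by have := (abs_nonneg (u 0)).trans (hb 0); simpa using this
  set e2 : ℝ → ℝ := fun t => rexp (-t^2/2) with he2
  have he2c : Continuous e2 := by continuity
  have he2pos : ∀ t, 0 < e2 t := fun t => Real.exp_pos _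
  -- pointwise bounds
  have hbound1 : ∀ t, |t * u t * e2 t| ≤ c * ((1+|t|)^(n+1) * e2 t) := by
    intro t
    rw [abs_mul, abs_mul, abs_of_pos (he2pos t)]
    have h1 : |t| * |u t| ≤ (1+|t|) * (c*(1+|t|)^n) := by
      apply mul_le_mul (by linarith [abs_nonneg t]) (hb t) (abs_nonneg _) (by positivity)
    calc |t| * |u t| * e2 t ≤ ((1+|t|) * (c*(1+|t|)^n)) * e2 t :=
          mul_le_mul_of_nonneg_right h1 (he2pos t).le
      _ = c * ((1+|t|)^(n+1) * e2 t) := by ring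
  have hbound2 : ∀ t, |u' t * e2 t| ≤ c * ((1+|t|)^(n+1) * e2 t) := by
    intro t
    rw [abs_mul, abs_of_pos (he2pos t)]
    have h1 : |u' t| ≤ c*(1+|t|)^(n+1) := by
      refine (hb' t).trans ?_
      have : (1+|t|)^n ≤ (1+|t|)^(n+1) :=
        pow_le_pow_right₀ (by linarith [abs_nonneg t]) (Nat.le_succ n)
      nlinarith [pow_nonneg (by linarith [abs_nonneg t] : (0:ℝ) ≤ 1+|t|) n]
    calc |u' t| * e2 t ≤ (c*(1+|t|)^(n+1)) * e2 t := mul_le_mul_of_nonneg_right h1 (he2pos t).le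
      _ = c * ((1+|t|)^(n+1) * e2 t) := by ring
  have hmaj : Integrable (fun t : ℝ => c * ((1+|t|)^(n+1) * e2 t)) :=
    (master_integrable (n+1)).const_mul c
  have hint1 : Integrable (fun t : ℝ => t * u t * e2 t) := by
    refine hmaj.mono' ((continuous_id.mul huc).mul he2c).aestronglyMeasurable ?_
    filter_upwards with t using by rw [Real.norm_eq_abs]; exact hbound1 t
  have hint2 : Integrable (fun t : ℝ => u' t * e2 t) := by
    refine hmaj.mono' (hu'c.mul he2c).aestronglyMeasurable ?_
    filter_upwards with t using by rw [Real.norm_eq_abs]; exact hbound2 t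
  -- the antiderivative
  set W : ℝ → ℝ := fun t => -u t * e2 t with hW
  have hWd : ∀ t, HasDerivAt W (t * u t * e2 t - u' t * e2 t) t := by
    intro t
    have := (hu t).neg.mul (deriv_exp_neg_sq t)
    exact this.congr_deriv (by simp only [he2, Pi.neg_apply]; ring)
  have hnormW : ∀ t, ‖W t‖ ≤ c * ((1+|t|)^n * e2 t) := by
    intro t
    rw [Real.norm_eq_abs, hW]
    simp only [abs_mul, abs_neg, abs_of_pos (he2pos t)]
    calc |u t| * e2 t ≤ (c*(1+|t|)^n) * e2 t := mul_le_mul_of_nonneg_right (hb t) (he2pos t).le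
      _ = c * ((1+|t|)^n * e2 t) := by ring
  have hWtop : Tendsto W atTop (𝓝 0) :=
    squeeze_zero_norm hnormW (by simpa using (master_tendsto_atTop n).const_mul c)
  have hWbot : Tendsto W atBot (𝓝 0) :=
    squeeze_zero_norm hnormW (by simpa using (master_tendsto_atBot n).const_mul c)
  set D : ℝ → ℝ := fun t => t * u t * e2 t - u' t * e2 t with hD
  have hDint : Integrable D := hint1.sub hint2
  have hIic : ∫ t in Iic (0:ℝ), D t = W 0 - 0 := by
    apply integral_Iic_of_hasDerivAt_of_tendsto
    · exact (huc.neg.mul he2c).continuousWithinAt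
    · exact fun x _ => hWd x
    · exact hDint.integrableOn
    · exact hWbot
  have hIoi : ∫ t in Ioi (0:ℝ), D t = 0 - W 0 := by
    apply integral_Ioi_of_hasDerivAt_of_tendsto
    · exact (huc.neg.mul he2c).continuousWithinAt
    · exact fun x _ => hWd x
    · exact hDint.integrableOn
    · exact hWtop
  have hDzero : ∫ t, D t = 0 := by
    rw [← intervalIntegral.integral_Iic_add_Ioi hDint.integrableOn hDint.integrableOn, hIic, hIoi]
    ring
  have hsub : (∫ t, t * u t * e2 t) - (∫ t, u' t * e2 t) = 0 := by
    rw [← integral_sub hint1 hint2]; exact hDzero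
  -- convert to gaussian integrals
  have key : ∀ v : ℝ → ℝ, ∫ t, v t ∂(gaussianReal 0 1) = (√(2*π))⁻¹ * ∫ t, v t * e2 t := by
    intro v
    rw [gauss_integral_eq]
    rw [← integral_const_mul]
    congr 1; funext t
    rw [gaussianPDFReal_eq]; ring
  rw [key (fun t => t * u t), key u']
  congr 1
  have : (fun t => (fun t => t * u t) t * e2 t) = fun t => t * u t * e2 t := rfl
  rw [this]
  linarith [hsub]


lemma integrable_pow_gauss (j : ℕ) : Integrable (fun t : ℝ => t^j) (gaussianReal 0 1) := by
  rw [gaussianReal_of_var_ne_zero 0 one_ne_zero]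
  rw [integrable_withDensity_iff (measurable_gaussianPDF 0 1)
    (Filter.Eventually.of_forall fun x => ENNReal.ofReal_lt_top)]
  have hmaj : Integrable (fun t : ℝ => (√(2*π))⁻¹ * ((1+|t|)^j * rexp (-t^2/2))) :=
    ((master_integrable j).const_mul _)
  refine hmaj.mono' ?_ ?_
  · apply Continuous.aestronglyMeasurable
    apply (continuous_pow j).mul
    have : Continuous (gaussianPDFReal 0 1) := by
      rw [gaussianPDFReal_def]; continuity
    have h2 : (fun t : ℝ => (gaussianPDF 0 1 t).toReal) =
        fun t => max (gaussianPDFReal 0 1 t) 0 := by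
      funext t; exact ENNReal.toReal_ofReal'
    rw [h2]
    exact this.max continuous_const
  · filter_upwards with t
    rw [Real.norm_eq_abs, abs_mul]
    have h1 : ((gaussianPDF 0 1 t).toReal : ℝ) = gaussianPDFReal 0 1 t := by
      rw [gaussianPDF]
      exact ENNReal.toReal_ofReal (gaussianPDFReal_nonneg 0 1 t)
    rw [h1, gaussianPDFReal_eq, abs_of_nonneg (by positivity : (0:ℝ) ≤ (√(2*π))⁻¹ * rexp (-t^2/2))]
    have h2 : |t^j| ≤ (1+|t|)^j := by
      rw [abs_pow]
      exact pow_le_pow_left₀ (abs_nonneg t) (by linarith) j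
    calc |t^j| * ((√(2*π))⁻¹ * rexp (-t^2/2)) ≤ (1+|t|)^j * ((√(2*π))⁻¹ * rexp (-t^2/2)) := by
          apply mul_le_mul_of_nonneg_right h2 (by positivity)
      _ = (√(2*π))⁻¹ * ((1+|t|)^j * rexp (-t^2/2)) := by ring

lemma integrable_pi_gauss_prod : ∀ {n : ℕ} {f : Fin n → ℝ → ℝ},
    (∀ i, Integrable (f i) (gaussianReal 0 1)) →
    Integrable (fun x : Fin n → ℝ => ∏ i, f i (x i)) (Measure.pi fun _ => gaussianReal 0 1) := by
  intro n
  induction n with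
  | zero => intro f hf; simpa using integrable_const (1:ℝ)
  | succ n n_ih =>
      intro f hf
      have hmp := ((measurePreserving_piFinSuccAbove
        (fun _ : Fin (n+1) => gaussianReal 0 1) 0).symm)
      rw [← hmp.integrable_comp_emb (MeasurableEquiv.measurableEmbedding _)]
      simp_rw [MeasurableEquiv.piFinSuccAbove_symm_apply, Fin.insertNthEquiv,
        Fin.prod_univ_succ, Fin.insertNth_zero]
      simp only [Fin.zero_succAbove, Function.comp_def, Fin.cons_zero, Fin.cons_succ,
        Equiv.coe_fn_mk]
      have h2 : Integrable (fun x : Fin n → ℝ => ∏ j, f (Fin.succ j) (x j))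
          (Measure.pi fun _ => gaussianReal 0 1) := n_ih (fun i => hf _)
      exact Integrable.mul_prod (hf 0) h2

lemma integrable_eval {m : ℕ} (R : MvPolynomial (Fin m) ℝ) :
    Integrable (fun x : Fin m → ℝ => MvPolynomial.eval x R)
      (Measure.pi fun _ => gaussianReal 0 1) := by
  have : (fun x : Fin m → ℝ => MvPolynomial.eval x R) =
      fun x => ∑ d ∈ R.support, MvPolynomial.coeff d R * ∏ i, (x i) ^ (d i) := by
    funext x; exact MvPolynomial.eval_eq' x R
  rw [this]
  apply integrable_finset_sum
  intro d _
  exact (integrable_pi_gauss_prod (f := fun i t => t ^ (d i))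
    (fun i => integrable_pow_gauss (d i))).const_mul _

lemma hasDerivAt_eval_update {m : ℕ} (R : MvPolynomial (Fin m) ℝ) (i : Fin m) :
    ∀ x : Fin m → ℝ, HasDerivAt (fun t => MvPolynomial.eval (Function.update x i t) R)
      (MvPolynomial.eval x (MvPolynomial.pderiv i R)) (x i) := by
  induction R using MvPolynomial.induction_on with
  | C a =>
      intro x
      simp only [MvPolynomial.eval_C, MvPolynomial.pderiv_C, MvPolynomial.eval_zero]
      exact hasDerivAt_const _ _
  | add p q hp hq =>
      intro x
      simp only [MvPolynomial.eval_add, map_add]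
      exact (hp x).add (hq x)
  | mul_X p j hp =>
      intro x
      by_cases hji : j = i
      · subst hji
        have h1 : (fun t => MvPolynomial.eval (Function.update x j t) (p * MvPolynomial.X j)) =
            fun t => (MvPolynomial.eval (Function.update x j t) p) * t := by
          funext t; simp [Function.update_self]
        rw [h1]
        have := (hp x).mul (hasDerivAt_id (x j))
        refine this.congr_deriv ?_
        simp [MvPolynomial.pderiv_mul, MvPolynomial.pderiv_X, Function.update_self]
        ring
      · have h1 : (fun t => MvPolynomial.eval (Function.update x i t) (p * MvPolynomial.X j)) =
            fun t => (MvPolynomial.eval (Function.update x i t) p) * x j := by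
          funext t; simp [Function.update_of_ne hji]
        rw [h1]
        have := (hp x).mul_const (x j)
        refine this.congr_deriv ?_
        simp [MvPolynomial.pderiv_mul, MvPolynomial.pderiv_X, hji,
          MvPolynomial.pderiv_X_of_ne, Function.update_of_ne hji]
        ring
  
lemma eval_update_bound {m : ℕ} (R : MvPolynomial (Fin m) ℝ) (i : Fin m) (x : Fin m → ℝ) :
    ∃ (c : ℝ) (n : ℕ), 0 ≤ c ∧
      ∀ t, |MvPolynomial.eval (Function.update x i t) R| ≤ c * (1+|t|)^n := by
  induction R using MvPolynomial.induction_on with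
  | C a => exact ⟨|a|, 0, abs_nonneg a, fun t => by simp⟩
  | add p q hp hq =>
      obtain ⟨c1, n1, hc1, h1⟩ := hp
      obtain ⟨c2, n2, hc2, h2⟩ := hq
      refine ⟨c1 + c2, max n1 n2, by linarith, fun t => ?_⟩
      have hbase : (1:ℝ) ≤ 1 + |t| := by linarith [abs_nonneg t]
      have e1 : (1+|t|)^n1 ≤ (1+|t|)^(max n1 n2) := pow_le_pow_right₀ hbase (le_max_left _ _)
      have e2 : (1+|t|)^n2 ≤ (1+|t|)^(max n1 n2) := pow_le_pow_right₀ hbase (le_max_right _ _)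
      simp only [MvPolynomial.eval_add]
      calc |MvPolynomial.eval (Function.update x i t) p +
            MvPolynomial.eval (Function.update x i t) q|
          ≤ |MvPolynomial.eval (Function.update x i t) p| +
            |MvPolynomial.eval (Function.update x i t) q| := abs_add_le _ _
        _ ≤ c1 * (1+|t|)^n1 + c2 * (1+|t|)^n2 := add_le_add (h1 t) (h2 t)
        _ ≤ c1 * (1+|t|)^(max n1 n2) + c2 * (1+|t|)^(max n1 n2) := by
            apply add_le_add (mul_le_mul_of_nonneg_left e1 hc1) (mul_le_mul_of_nonneg_left e2 hc2)
        _ = (c1 + c2) * (1+|t|)^(max n1 n2) := by ring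
  | mul_X p j hp =>
      obtain ⟨c, n, hc, h⟩ := hp
      have hbase : ∀ t : ℝ, (1:ℝ) ≤ 1 + |t| := fun t => by linarith [abs_nonneg t]
      by_cases hji : j = i
      · subst hji
        refine ⟨c, n+1, hc, fun t => ?_⟩
        simp only [MvPolynomial.eval_mul, MvPolynomial.eval_X, Function.update_self]
        rw [abs_mul, pow_succ]
        have : |t| ≤ 1 + |t| := by linarith [abs_nonneg t]
        calc |MvPolynomial.eval (Function.update x j t) p| * |t|
            ≤ (c * (1+|t|)^n) * (1+|t|) := by
              apply mul_le_mul (h t) this (abs_nonneg t) (by positivity)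
          _ = c * ((1+|t|)^n * (1+|t|)) := by ring
      · refine ⟨c * |x j|, n, by positivity, fun t => ?_⟩
        simp only [MvPolynomial.eval_mul, MvPolynomial.eval_X, Function.update_of_ne hji]
        rw [abs_mul]
        calc |MvPolynomial.eval (Function.update x i t) p| * |x j|
            ≤ (c * (1+|t|)^n) * |x j| := mul_le_mul_of_nonneg_right (h t) (abs_nonneg _)
          _ = (c * |x j|) * (1+|t|)^n := by ring

variable {m : ℕ} (i : Fin m)

instance uniqSub : Unique {j : Fin m // j = i} :=
  ⟨⟨⟨i, rfl⟩⟩, fun a => Subtype.ext a.2⟩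

def Teq : (Fin m → ℝ) ≃ᵐ ℝ × ({j : Fin m // ¬ j = i} → ℝ) :=
  (MeasurableEquiv.piEquivPiSubtypeProd (fun _ : Fin m => ℝ) (fun j => j = i)).trans
    ((MeasurableEquiv.funUnique {j : Fin m // j = i} ℝ).prodCongr (MeasurableEquiv.refl _))

def Xsl (y : {j : Fin m // ¬ j = i} → ℝ) (t : ℝ) : Fin m → ℝ :=
  fun j => if h : j = i then t else y ⟨j, h⟩

lemma Teq_symm_apply (y : {j : Fin m // ¬ j = i} → ℝ) (t : ℝ) :
    (Teq i).symm (t, y) = Xsl i y t := by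
  funext j
  simp only [Teq, Xsl, MeasurableEquiv.trans, MeasurableEquiv.symm, MeasurableEquiv.prodCongr,
    MeasurableEquiv.funUnique, MeasurableEquiv.refl, MeasurableEquiv.piEquivPiSubtypeProd,
    MeasurableEquiv.coe_mk, Equiv.trans, Equiv.symm, Equiv.prodCongr, Equiv.funUnique,
    Equiv.refl]
  by_cases h : j = i <;> simp [Equiv.piEquivPiSubtypeProd_symm_apply, h]

lemma hmpT : MeasurePreserving (Teq i) (Measure.pi fun _ : Fin m => gaussianReal 0 1)
    ((gaussianReal 0 1).prod (Measure.pi fun _ : {j : Fin m // ¬ j = i} => gaussianReal 0 1)) := by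
  have h1 := measurePreserving_piEquivPiSubtypeProd (fun _ : Fin m => gaussianReal 0 1)
    (fun j => j = i)
  have h2 : MeasurePreserving
      (Prod.map (MeasurableEquiv.funUnique {j : Fin m // j = i} ℝ) id)
      ((Measure.pi fun _ : {j : Fin m // j = i} => gaussianReal 0 1).prod
        (Measure.pi fun _ : {j : Fin m // ¬ j = i} => gaussianReal 0 1))
      ((gaussianReal 0 1).prod (Measure.pi fun _ : {j : Fin m // ¬ j = i} => gaussianReal 0 1)) :=
    (measurePreserving_funUnique (gaussianReal 0 1) _).prod (MeasurePreserving.id _)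
  have e : (@Measure.pi {j : Fin m // j = i} (fun _ => ℝ) (Subtype.fintype _)
        (fun _ => inferInstance) (fun _ => gaussianReal 0 1)) =
      (Measure.pi fun _ : {j : Fin m // j = i} => gaussianReal 0 1) :=
    congrArg (fun F => @Measure.pi {j : Fin m // j = i} (fun _ => ℝ) F
      (fun _ => inferInstance) (fun _ => gaussianReal 0 1)) (Subsingleton.elim _ _)
  rw [e] at h1
  exact h2.comp h1

lemma Xsl_update (y : {j : Fin m // ¬ j = i} → ℝ) (t s : ℝ) :
    Function.update (Xsl i y s) i t = Xsl i y t := by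
  funext j
  by_cases h : j = i
  · subst h; simp [Xsl]
  · simp [Function.update_of_ne h, Xsl, h]

lemma Xsl_apply_i (y : {j : Fin m // ¬ j = i} → ℝ) (t : ℝ) : Xsl i y t i = t := by
  simp [Xsl]

def gm (m : ℕ) : Measure (Fin m → ℝ) := Measure.pi fun _ => gaussianReal 0 1

instance (m : ℕ) : IsProbabilityMeasure (gm m) := by
  unfold gm; infer_instance

lemma continuous_Xsl {m : ℕ} (i : Fin m) (y : {j : Fin m // ¬ j = i} → ℝ) :
    Continuous (fun t => Xsl i y t) := by
  apply continuous_pi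
  intro j
  by_cases h : j = i
  · simp only [Xsl, h, dif_pos]; exact continuous_id
  · simp only [Xsl, h, dif_neg, not_false_iff]; exact continuous_const

lemma gibp_master {m : ℕ} (i : Fin m) (v dv : (Fin m → ℝ) → ℝ)
    (hv : Continuous v) (hdv : Continuous dv)
    (hder : ∀ x : Fin m → ℝ, HasDerivAt (fun t => v (Function.update x i t)) (dv x) (x i))
    (hgrow : ∀ x : Fin m → ℝ, ∃ c n, (0:ℝ) ≤ c ∧ ∀ t,
      |v (Function.update x i t)| ≤ c*(1+|t|)^n ∧ |dv (Function.update x i t)| ≤ c*(1+|t|)^n)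
    (hint1 : Integrable (fun x => x i * v x) (gm m))
    (hint2 : Integrable dv (gm m)) :
    ∫ x, x i * v x ∂(gm m) = ∫ x, dv x ∂(gm m) := by
  classical
  set γ1 := gaussianReal 0 1 with hγ1
  set γr := (Measure.pi fun _ : {j : Fin m // ¬ j = i} => gaussianReal 0 1) with hγr
  have hT : MeasurePreserving (Teq i) (gm m) (γ1.prod γr) := hmpT i
  have hTs : MeasurePreserving (Teq i).symm (γ1.prod γr) (gm m) :=
    hT.symm (Teq i)
  have emb := MeasurableEquiv.measurableEmbedding (Teq i).symm
  have key : ∀ G : (Fin m → ℝ) → ℝ, Integrable G (gm m) →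
      ∫ x, G x ∂(gm m) = ∫ y, ∫ t, G (Xsl i y t) ∂γ1 ∂γr := by
    intro G hG
    have h1 : ∫ x, G x ∂(gm m) = ∫ z, G ((Teq i).symm z) ∂(γ1.prod γr) :=
      (hTs.integral_comp emb G).symm
    have h2 : Integrable (fun z => G ((Teq i).symm z)) (γ1.prod γr) :=
      (hTs.integrable_comp_emb emb).2 hG
    rw [h1, integral_prod_symm _ h2]
    simp only [Teq_symm_apply]
  rw [key _ hint1, key _ hint2]
  congr 1; funext y
  -- slice-wise integration by parts
  obtain ⟨c, n, hc, hcn⟩ := hgrow (Xsl i y 0)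
  have hXupd : ∀ t : ℝ, Function.update (Xsl i y 0) i t = Xsl i y t := fun t => Xsl_update i y t 0
  have hu : ∀ t₀ : ℝ, HasDerivAt (fun t => v (Xsl i y t)) (dv (Xsl i y t₀)) t₀ := by
    intro t₀
    have h := hder (Xsl i y t₀)
    rw [Xsl_apply_i] at h
    have heq : (fun t => v (Function.update (Xsl i y t₀) i t)) = fun t => v (Xsl i y t) := by
      funext t; rw [Xsl_update]
    rwa [heq] at h
  have hibp := ibp1d (fun t => v (Xsl i y t)) (fun t => dv (Xsl i y t)) hu
    (hdv.comp (continuous_Xsl i y)) c n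
    (fun t => by have := (hcn t).1; rwa [hXupd t] at this)
    (fun t => by have := (hcn t).2; rwa [hXupd t] at this)
  have hl : (fun t => (Xsl i y t) i * v (Xsl i y t)) = fun t => t * v (Xsl i y t) := by
    funext t; rw [Xsl_apply_i]
  rw [hl]
  exact hibp


lemma pow_base_mono (t : ℝ) {k l : ℕ} (h : k ≤ l) : (1+|t|)^k ≤ (1+|t|)^l :=
  pow_le_pow_right₀ (by linarith [abs_nonneg t]) h

lemma integrable_poly_mul_bdd {m : ℕ} (A : MvPolynomial (Fin m) ℝ)
    (φ : (Fin m → ℝ) → ℝ) (hφ : Continuous φ) (a : ℝ) (ha : ∀ x, |φ x| ≤ a) :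
    Integrable (fun x => MvPolynomial.eval x A * φ x) (gm m) := by
  have h := (integrable_eval (m := m) A).bdd_mul (c := a)
    hφ.aestronglyMeasurable
    (Filter.Eventually.of_forall fun x => by rw [Real.norm_eq_abs]; exact ha x)
  have : (fun x => φ x * MvPolynomial.eval x A) = fun x => MvPolynomial.eval x A * φ x := by
    funext x; ring
  rwa [this] at h

lemma gibp_poly {m : ℕ} (i : Fin m) (R : MvPolynomial (Fin m) ℝ) :
    ∫ x, x i * MvPolynomial.eval x R ∂(gm m)
      = ∫ x, MvPolynomial.eval x (MvPolynomial.pderiv i R) ∂(gm m) := by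
  apply gibp_master i _ _ (MvPolynomial.continuous_eval R)
    (MvPolynomial.continuous_eval _) (fun x => hasDerivAt_eval_update R i x)
  · intro x
    obtain ⟨c1, n1, hc1, h1⟩ := eval_update_bound R i x
    obtain ⟨c2, n2, hc2, h2⟩ := eval_update_bound (MvPolynomial.pderiv i R) i x
    refine ⟨c1 + c2, max n1 n2, by linarith, fun t => ⟨?_, ?_⟩⟩
    · calc |MvPolynomial.eval (Function.update x i t) R| ≤ c1 * (1+|t|)^n1 := h1 t
        _ ≤ (c1+c2) * (1+|t|)^(max n1 n2) := by
            have := pow_base_mono t (le_max_left n1 n2)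
            have h0 : (0:ℝ) ≤ (1+|t|)^(max n1 n2) := by positivity
            nlinarith [pow_nonneg (by linarith [abs_nonneg t] : (0:ℝ) ≤ 1+|t|) n1]
    · calc |MvPolynomial.eval (Function.update x i t) (MvPolynomial.pderiv i R)|
          ≤ c2 * (1+|t|)^n2 := h2 t
        _ ≤ (c1+c2) * (1+|t|)^(max n1 n2) := by
            have := pow_base_mono t (le_max_right n1 n2)
            have h0 : (0:ℝ) ≤ (1+|t|)^(max n1 n2) := by positivity
            nlinarith [pow_nonneg (by linarith [abs_nonneg t] : (0:ℝ) ≤ 1+|t|) n2]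
  · have : (fun x : Fin m → ℝ => x i * MvPolynomial.eval x R)
        = fun x => MvPolynomial.eval x (MvPolynomial.X i * R) := by
      funext x; simp
    rw [this]; exact integrable_eval _
  · exact integrable_eval _

lemma gibp_comp {m : ℕ} (i : Fin m) (A B : MvPolynomial (Fin m) ℝ) (f f' : ℝ → ℝ)
    (hf : ∀ y, HasDerivAt f (f' y) y) (hf'c : Continuous f')
    (a cf : ℝ) (ha : 0 ≤ a) (hcf : 0 ≤ cf)
    (hfb : ∀ y, |f y| ≤ a) (hf'b : ∀ y, |f' y| ≤ cf) :
    ∫ x, x i * (MvPolynomial.eval x A * f (MvPolynomial.eval x B)) ∂(gm m)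
      = ∫ x, (MvPolynomial.eval x (MvPolynomial.pderiv i A) * f (MvPolynomial.eval x B)
          + MvPolynomial.eval x A * (f' (MvPolynomial.eval x B)
            * MvPolynomial.eval x (MvPolynomial.pderiv i B))) ∂(gm m) := by
  have hfc : Continuous f := continuous_iff_continuousAt.2 fun y => (hf y).continuousAt
  apply gibp_master i
    (fun x => MvPolynomial.eval x A * f (MvPolynomial.eval x B))
    (fun x => MvPolynomial.eval x (MvPolynomial.pderiv i A) * f (MvPolynomial.eval x B)
          + MvPolynomial.eval x A * (f' (MvPolynomial.eval x B)
            * MvPolynomial.eval x (MvPolynomial.pderiv i B)))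
    ((MvPolynomial.continuous_eval A).mul (hfc.comp (MvPolynomial.continuous_eval B)))
    (((MvPolynomial.continuous_eval _).mul (hfc.comp (MvPolynomial.continuous_eval B))).add
      ((MvPolynomial.continuous_eval A).mul
        ((hf'c.comp (MvPolynomial.continuous_eval B)).mul (MvPolynomial.continuous_eval _))))
  · -- derivative
    intro x
    have hA := hasDerivAt_eval_update A i x
    have hB := hasDerivAt_eval_update B i x
    have hcomp : HasDerivAt (fun t => f (MvPolynomial.eval (Function.update x i t) B))
        (f' (MvPolynomial.eval x B) * MvPolynomial.eval x (MvPolynomial.pderiv i B)) (x i) := by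
      have h0 : MvPolynomial.eval (Function.update x i (x i)) B = MvPolynomial.eval x B := by
        rw [Function.update_eq_self]
      have := (hf (MvPolynomial.eval (Function.update x i (x i)) B)).comp (x i) hB
      rwa [h0] at this
    have := hA.mul hcomp
    exact this.congr_deriv (by simp only [Function.update_eq_self])
  · -- growth
    intro x
    obtain ⟨cA, nA, hcA, hA⟩ := eval_update_bound A i x
    obtain ⟨cA', nA', hcA', hA'⟩ := eval_update_bound (MvPolynomial.pderiv i A) i x
    obtain ⟨cB', nB', hcB', hB'⟩ := eval_update_bound (MvPolynomial.pderiv i B) i x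
    set N := nA + nA' + nB' with hN
    refine ⟨a*cA + a*cA' + cf*(cA*cB'), N, by positivity, fun t => ⟨?_, ?_⟩⟩
    · have hP : (0:ℝ) ≤ 1+|t| := by linarith [abs_nonneg t]
      have h1 : |MvPolynomial.eval (Function.update x i t) A
            * f (MvPolynomial.eval (Function.update x i t) B)|
          ≤ (cA * (1+|t|)^nA) * a := by
        rw [abs_mul]
        exact mul_le_mul (hA t) (hfb _) (abs_nonneg _) (by positivity)
      refine h1.trans ?_
      have h2 : (1+|t|)^nA ≤ (1+|t|)^N := pow_base_mono t (by omega)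
      have h3 : (0:ℝ) ≤ (1+|t|)^N := by positivity
      nlinarith [pow_nonneg hP nA, mul_nonneg (mul_nonneg hcA' ha) h3,
        mul_nonneg (mul_nonneg hcf (mul_nonneg hcA hcB')) h3,
        mul_le_mul_of_nonneg_left h2 (mul_nonneg ha hcA)]
    · have hP : (0:ℝ) ≤ 1+|t| := by linarith [abs_nonneg t]
      have h3 : (0:ℝ) ≤ (1+|t|)^N := by positivity
      refine (abs_add_le _ _).trans ?_
      have h1 : |MvPolynomial.eval (Function.update x i t) (MvPolynomial.pderiv i A)
            * f (MvPolynomial.eval (Function.update x i t) B)|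
          ≤ (cA' * (1+|t|)^nA') * a := by
        rw [abs_mul]
        exact mul_le_mul (hA' t) (hfb _) (abs_nonneg _) (by positivity)
      have h2 : |MvPolynomial.eval (Function.update x i t) A
            * (f' (MvPolynomial.eval (Function.update x i t) B)
              * MvPolynomial.eval (Function.update x i t) (MvPolynomial.pderiv i B))|
          ≤ (cA * (1+|t|)^nA) * (cf * (cB' * (1+|t|)^nB')) := by
        rw [abs_mul, abs_mul]
        apply mul_le_mul (hA t) _ (by positivity) (by positivity)
        exact mul_le_mul (hf'b _) (hB' t) (abs_nonneg _) hcf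
      have e1 : (1+|t|)^nA' ≤ (1+|t|)^N := pow_base_mono t (by omega)
      have e2 : (1+|t|)^nA * (1+|t|)^nB' = (1+|t|)^(nA+nB') := (pow_add _ _ _).symm
      have e3 : (1+|t|)^(nA+nB') ≤ (1+|t|)^N := pow_base_mono t (by omega)
      have k1 : cA' * (1+|t|)^nA' * a ≤ a*cA' * (1+|t|)^N := by
        have heq : cA' * (1+|t|)^nA' * a = a*cA' * (1+|t|)^nA' := by ring
        rw [heq]
        exact mul_le_mul_of_nonneg_left e1 (by positivity)
      have k2 : cA * (1+|t|)^nA * (cf*(cB' * (1+|t|)^nB')) ≤ cf*(cA*cB') * (1+|t|)^N := by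
        have heq : cA * (1+|t|)^nA * (cf*(cB' * (1+|t|)^nB'))
            = cf*(cA*cB') * ((1+|t|)^nA * (1+|t|)^nB') := by ring
        rw [heq, e2]
        exact mul_le_mul_of_nonneg_left e3 (by positivity)
      have k3 : (0:ℝ) ≤ a*cA * (1+|t|)^N := by positivity
      linarith [h1, h2, k1, k2]
  · -- integrability LHS
    have heq : (fun x : Fin m → ℝ
          => x i * (MvPolynomial.eval x A * f (MvPolynomial.eval x B)))
        = fun x => MvPolynomial.eval x (MvPolynomial.X i * A) * f (MvPolynomial.eval x B) := by
      funext x; simp; ring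
    rw [heq]
    exact integrable_poly_mul_bdd _ _ (hfc.comp (MvPolynomial.continuous_eval B)) a
      (fun x => hfb _)
  · -- integrability RHS
    apply Integrable.add
    · exact integrable_poly_mul_bdd _ _ (hfc.comp (MvPolynomial.continuous_eval B)) a
        (fun x => hfb _)
    · have heq : (fun x : Fin m → ℝ => MvPolynomial.eval x A
            * (f' (MvPolynomial.eval x B) * MvPolynomial.eval x (MvPolynomial.pderiv i B)))
          = fun x => MvPolynomial.eval x (A * MvPolynomial.pderiv i B)
              * f' (MvPolynomial.eval x B) := by
        funext x; simp; ring
      rw [heq]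
      exact integrable_poly_mul_bdd _ _ (hf'c.comp (MvPolynomial.continuous_eval B)) cf
        (fun x => hf'b _)


variable {m : ℕ}

/-- `∫ |∇Q|² dγ = k ∫ Q² dγ` for an eigenfunction `Q`. -/
lemma eval_S_integral (k : ℕ) (Q : MvPolynomial (Fin m) ℝ)
    (heig : ∀ x : Fin m → ℝ,
      (∑ i, MvPolynomial.eval x (MvPolynomial.pderiv i (MvPolynomial.pderiv i Q))) -
        (∑ i, x i * MvPolynomial.eval x (MvPolynomial.pderiv i Q))
      = -(k : ℝ) * MvPolynomial.eval x Q) :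
    ∫ x, (∑ i, (MvPolynomial.eval x (MvPolynomial.pderiv i Q))^2) ∂(gm m)
      = (k:ℝ) * ∫ x, (MvPolynomial.eval x Q)^2 ∂(gm m) := by
  classical
  set D : Fin m → MvPolynomial (Fin m) ℝ := fun i => MvPolynomial.pderiv i Q with hD
  set LapQ : MvPolynomial (Fin m) ℝ := ∑ i, MvPolynomial.pderiv i (D i) with hLap
  have h1 : ∀ i : Fin m, ∫ x, x i * MvPolynomial.eval x (D i * Q) ∂(gm m)
      = ∫ x, MvPolynomial.eval x (MvPolynomial.pderiv i (D i * Q)) ∂(gm m) :=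
    fun i => gibp_poly i _
  have hIL : ∀ i : Fin m, Integrable (fun x => x i * MvPolynomial.eval x (D i * Q)) (gm m) := by
    intro i
    have heq : (fun x : Fin m → ℝ => x i * MvPolynomial.eval x (D i * Q))
        = fun x => MvPolynomial.eval x (MvPolynomial.X i * (D i * Q)) := by
      funext x; simp only [map_mul, MvPolynomial.eval_X]
    rw [heq]; exact integrable_eval _
  have hIR : ∀ i : Fin m, Integrable
      (fun x => MvPolynomial.eval x (MvPolynomial.pderiv i (D i * Q))) (gm m) :=
    fun i => integrable_eval _
  have hsum : ∫ x, (∑ i, x i * MvPolynomial.eval x (D i * Q)) ∂(gm m)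
      = ∫ x, (∑ i, MvPolynomial.eval x (MvPolynomial.pderiv i (D i * Q))) ∂(gm m) := by
    rw [integral_finset_sum _ (fun i _ => hIL i),
      integral_finset_sum _ (fun i _ => hIR i)]
    exact Finset.sum_congr rfl (fun i _ => h1 i)
  have hL : (fun x : Fin m → ℝ => ∑ i, x i * MvPolynomial.eval x (D i * Q))
      = fun x => MvPolynomial.eval x (LapQ * Q) + (k:ℝ) * (MvPolynomial.eval x Q)^2 := by
    funext x
    have h := heig x
    have e1 : ∑ i, x i * MvPolynomial.eval x (D i * Q)
        = (∑ i, x i * MvPolynomial.eval x (D i)) * MvPolynomial.eval x Q := by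
      rw [Finset.sum_mul]
      exact Finset.sum_congr rfl (fun i _ => by rw [map_mul]; ring)
    rw [e1]
    have e2 : (∑ i, x i * MvPolynomial.eval x (D i))
        = MvPolynomial.eval x LapQ + (k:ℝ) * MvPolynomial.eval x Q := by
      rw [hLap, map_sum]
      have := heig x
      simp only [hD] at this ⊢
      linarith [this]
    rw [e2, map_mul]; ring
  have hR : (fun x : Fin m → ℝ => ∑ i, MvPolynomial.eval x (MvPolynomial.pderiv i (D i * Q)))
      = fun x => MvPolynomial.eval x (LapQ * Q)
          + ∑ i, (MvPolynomial.eval x (D i))^2 := by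
    funext x
    simp only [MvPolynomial.pderiv_mul, map_add, map_mul, hLap, map_sum, Finset.sum_mul]
    rw [Finset.sum_add_distrib]
    congr 1
    exact Finset.sum_congr rfl (fun i _ => by rw [sq])
  rw [hL, hR] at hsum
  have hInt1 : Integrable (fun x => MvPolynomial.eval x (LapQ * Q)) (gm m) :=
    integrable_eval _
  have hInt2 : Integrable (fun x => (k:ℝ) * (MvPolynomial.eval x Q)^2) (gm m) := by
    have heq : (fun x : Fin m → ℝ => (k:ℝ) * (MvPolynomial.eval x Q)^2)
        = fun x => (k:ℝ) * MvPolynomial.eval x (Q^2) := by funext x; rw [map_pow]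
    rw [heq]; exact (integrable_eval _).const_mul _
  have hInt3 : Integrable (fun x => ∑ i, (MvPolynomial.eval x (D i))^2) (gm m) := by
    have heq : (fun x : Fin m → ℝ => ∑ i, (MvPolynomial.eval x (D i))^2)
        = fun x => MvPolynomial.eval x (∑ i, (D i)^2) := by
      funext x; rw [map_sum]; exact Finset.sum_congr rfl (fun i _ => by rw [map_pow])
    rw [heq]; exact integrable_eval _
  rw [integral_add hInt1 hInt2, integral_add hInt1 hInt3] at hsum
  have hk : ∫ x, (k:ℝ) * (MvPolynomial.eval x Q)^2 ∂(gm m)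
      = (k:ℝ) * ∫ x, (MvPolynomial.eval x Q)^2 ∂(gm m) := integral_const_mul _ _
  rw [hk] at hsum
  simp only [hD] at hsum
  linarith [hsum]

/-- `k ∫ Q f(Q) dγ = ∫ |∇Q|² f'(Q) dγ` for an eigenfunction `Q` and bounded `C¹` `f`. -/
lemma chaos_identity (k : ℕ) (Q : MvPolynomial (Fin m) ℝ)
    (heig : ∀ x : Fin m → ℝ,
      (∑ i, MvPolynomial.eval x (MvPolynomial.pderiv i (MvPolynomial.pderiv i Q))) -
        (∑ i, x i * MvPolynomial.eval x (MvPolynomial.pderiv i Q))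
      = -(k : ℝ) * MvPolynomial.eval x Q)
    (f f' : ℝ → ℝ) (hf : ∀ y, HasDerivAt f (f' y) y) (hf'c : Continuous f')
    (a cf : ℝ) (ha : 0 ≤ a) (hcf : 0 ≤ cf)
    (hfb : ∀ y, |f y| ≤ a) (hf'b : ∀ y, |f' y| ≤ cf) :
    (k:ℝ) * ∫ x, MvPolynomial.eval x Q * f (MvPolynomial.eval x Q) ∂(gm m)
      = ∫ x, (∑ i, (MvPolynomial.eval x (MvPolynomial.pderiv i Q))^2)
          * f' (MvPolynomial.eval x Q) ∂(gm m) := by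
  classical
  have hfc : Continuous f := continuous_iff_continuousAt.2 fun y => (hf y).continuousAt
  set D : Fin m → MvPolynomial (Fin m) ℝ := fun i => MvPolynomial.pderiv i Q with hD
  set LapQ : MvPolynomial (Fin m) ℝ := ∑ i, MvPolynomial.pderiv i (D i) with hLap
  set F : (Fin m → ℝ) → ℝ := fun x => MvPolynomial.eval x Q with hF
  have h1 : ∀ i : Fin m, ∫ x, x i * (MvPolynomial.eval x (D i) * f (F x)) ∂(gm m)
      = ∫ x, (MvPolynomial.eval x (MvPolynomial.pderiv i (D i)) * f (F x)
          + MvPolynomial.eval x (D i) * (f' (F x) * MvPolynomial.eval x (D i))) ∂(gm m) :=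
    fun i => gibp_comp i (D i) Q f f' hf hf'c a cf ha hcf hfb hf'b
  have hIL : ∀ i : Fin m,
      Integrable (fun x => x i * (MvPolynomial.eval x (D i) * f (F x))) (gm m) := by
    intro i
    have heq : (fun x : Fin m → ℝ => x i * (MvPolynomial.eval x (D i) * f (F x)))
        = fun x => MvPolynomial.eval x (MvPolynomial.X i * D i) * f (F x) := by
      funext x; simp only [map_mul, MvPolynomial.eval_X]; ring
    rw [heq]
    exact integrable_poly_mul_bdd _ _ (hfc.comp (MvPolynomial.continuous_eval Q)) a
      (fun x => hfb _)
  have hIR : ∀ i : Fin m,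
      Integrable (fun x => MvPolynomial.eval x (MvPolynomial.pderiv i (D i)) * f (F x)
          + MvPolynomial.eval x (D i) * (f' (F x) * MvPolynomial.eval x (D i))) (gm m) := by
    intro i
    apply Integrable.add
    · exact integrable_poly_mul_bdd _ _ (hfc.comp (MvPolynomial.continuous_eval Q)) a
        (fun x => hfb _)
    · have heq : (fun x : Fin m → ℝ
            => MvPolynomial.eval x (D i) * (f' (F x) * MvPolynomial.eval x (D i)))
          = fun x => MvPolynomial.eval x (D i * D i) * f' (F x) := by
        funext x; simp only [map_mul]; ring
      rw [heq]
      exact integrable_poly_mul_bdd _ _ (hf'c.comp (MvPolynomial.continuous_eval Q)) cf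
        (fun x => hf'b _)
  have hsum : ∫ x, (∑ i, x i * (MvPolynomial.eval x (D i) * f (F x))) ∂(gm m)
      = ∫ x, (∑ i, (MvPolynomial.eval x (MvPolynomial.pderiv i (D i)) * f (F x)
          + MvPolynomial.eval x (D i) * (f' (F x) * MvPolynomial.eval x (D i)))) ∂(gm m) := by
    rw [integral_finset_sum _ (fun i _ => hIL i), integral_finset_sum _ (fun i _ => hIR i)]
    exact Finset.sum_congr rfl (fun i _ => h1 i)
  have hL : (fun x : Fin m → ℝ => ∑ i, x i * (MvPolynomial.eval x (D i) * f (F x)))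
      = fun x => MvPolynomial.eval x LapQ * f (F x) + (k:ℝ) * (F x * f (F x)) := by
    funext x
    have e1 : ∑ i, x i * (MvPolynomial.eval x (D i) * f (F x))
        = (∑ i, x i * MvPolynomial.eval x (D i)) * f (F x) := by
      rw [Finset.sum_mul]
      exact Finset.sum_congr rfl (fun i _ => by ring)
    rw [e1]
    have e2 : (∑ i, x i * MvPolynomial.eval x (D i))
        = MvPolynomial.eval x LapQ + (k:ℝ) * F x := by
      rw [hLap, map_sum]
      have := heig x
      simp only [hD, hF] at this ⊢
      linarith [this]
    rw [e2]; ring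
  have hR : (fun x : Fin m → ℝ => ∑ i, (MvPolynomial.eval x (MvPolynomial.pderiv i (D i)) * f (F x)
          + MvPolynomial.eval x (D i) * (f' (F x) * MvPolynomial.eval x (D i))))
      = fun x => MvPolynomial.eval x LapQ * f (F x)
          + (∑ i, (MvPolynomial.eval x (D i))^2) * f' (F x) := by
    funext x
    rw [Finset.sum_add_distrib]
    congr 1
    · rw [hLap, map_sum, Finset.sum_mul]
    · rw [Finset.sum_mul]
      exact Finset.sum_congr rfl (fun i _ => by ring)
  rw [hL, hR] at hsum
  have hInt1 : Integrable (fun x => MvPolynomial.eval x LapQ * f (F x)) (gm m) :=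
    integrable_poly_mul_bdd _ _ (hfc.comp (MvPolynomial.continuous_eval Q)) a (fun x => hfb _)
  have hInt2 : Integrable (fun x => (k:ℝ) * (F x * f (F x))) (gm m) := by
    apply Integrable.const_mul
    exact integrable_poly_mul_bdd Q _ (hfc.comp (MvPolynomial.continuous_eval Q)) a
      (fun x => hfb _)
  have hInt3 : Integrable
      (fun x => (∑ i, (MvPolynomial.eval x (D i))^2) * f' (F x)) (gm m) := by
    have heq : (fun x : Fin m → ℝ => (∑ i, (MvPolynomial.eval x (D i))^2) * f' (F x))
        = fun x => MvPolynomial.eval x (∑ i, (D i)^2) * f' (F x) := by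
      funext x
      rw [map_sum]
      congr 1
      exact Finset.sum_congr rfl (fun i _ => by rw [map_pow])
    rw [heq]
    exact integrable_poly_mul_bdd _ _ (hf'c.comp (MvPolynomial.continuous_eval Q)) cf
      (fun x => hf'b _)
  rw [integral_add hInt1 hInt2, integral_add hInt1 hInt3] at hsum
  have hk : ∫ x, (k:ℝ) * (F x * f (F x)) ∂(gm m)
      = (k:ℝ) * ∫ x, F x * f (F x) ∂(gm m) := integral_const_mul _ _
  rw [hk] at hsum
  simp only [hD, hF] at hsum ⊢
  linarith [hsum]


lemma deriv_exp_pos_sq (t : ℝ) :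
    HasDerivAt (fun s : ℝ => rexp (s^2/2)) (t * rexp (t^2/2)) t := by
  have h1 : HasDerivAt (fun s : ℝ => s^2/2) t t := by
    have := ((hasDerivAt_pow 2 t).div_const 2)
    exact this.congr_deriv (by push_cast; ring)
  simpa [mul_comm] using h1.exp

lemma integral_exp_neg_half_sq : ∫ t : ℝ, rexp (-t^2/2) = √(2*π) := by
  have h := integral_gaussian (1/2)
  have h2 : (fun x : ℝ => rexp (-(1/2) * x^2)) = fun t : ℝ => rexp (-t^2/2) := by
    funext t; ring_nf
  rw [h2] at h
  rw [h]
  rw [show π/(1/2) = 2*π by ring]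

lemma integrable_exp_neg_half_sq : Integrable (fun t : ℝ => rexp (-t^2/2)) := by
  have h := integrable_exp_neg_mul_sq (show (0:ℝ) < 1/2 by norm_num)
  have h2 : (fun x : ℝ => rexp (-(1/2) * x^2)) = fun t : ℝ => rexp (-t^2/2) := by
    funext t; ring_nf
  rwa [h2] at h

lemma integrable_linear_exp : Integrable (fun t : ℝ => t * rexp (-t^2/2)) := by
  refine (master_integrable 1).mono' ?_ ?_
  · exact (continuous_id.mul (((continuous_pow 2).neg.div_const 2).rexp)).aestronglyMeasurable
  · filter_upwards with t
    rw [Real.norm_eq_abs, abs_mul, abs_of_pos (Real.exp_pos _), pow_one]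
    have : |t| ≤ 1 + |t| := by linarith [abs_nonneg t]
    exact mul_le_mul_of_nonneg_right this (Real.exp_pos _).le

/-- Gaussian tail: `∫_{Ioi x} t e^{-t²/2} = e^{-x²/2}`. -/
lemma tail_integral_linear (x : ℝ) :
    ∫ t in Ioi x, t * rexp (-t^2/2) = rexp (-x^2/2) := by
  have hder : ∀ t ∈ Ioi x, HasDerivAt (fun s : ℝ => -rexp (-s^2/2)) (t * rexp (-t^2/2)) t := by
    intro t _
    have := (deriv_exp_neg_sq t).neg
    exact this.congr_deriv (by ring)
  have hcont : ContinuousWithinAt (fun s : ℝ => -rexp (-s^2/2)) (Ici x) x := by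
    apply Continuous.continuousWithinAt; continuity
  have htend : Tendsto (fun s : ℝ => -rexp (-s^2/2)) atTop (𝓝 0) := by
    rw [show (0:ℝ) = -0 by ring]
    apply Tendsto.neg
    have := master_tendsto_atTop 0
    simpa using this
  have := integral_Ioi_of_hasDerivAt_of_tendsto hcont hder
    integrable_linear_exp.integrableOn htend
  rw [this]; ring

lemma tail_integral_linear_bot (x : ℝ) :
    ∫ t in Iic x, t * rexp (-t^2/2) = -rexp (-x^2/2) := by
  have hder : ∀ t ∈ Iio x, HasDerivAt (fun s : ℝ => -rexp (-s^2/2)) (t * rexp (-t^2/2)) t := by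
    intro t _
    have := (deriv_exp_neg_sq t).neg
    exact this.congr_deriv (by ring)
  have hcont : ContinuousWithinAt (fun s : ℝ => -rexp (-s^2/2)) (Iic x) x := by
    apply Continuous.continuousWithinAt; continuity
  have htend : Tendsto (fun s : ℝ => -rexp (-s^2/2)) atBot (𝓝 0) := by
    rw [show (0:ℝ) = -0 by ring]
    apply Tendsto.neg
    have := master_tendsto_atBot 0
    simpa using this
  have := integral_Iic_of_hasDerivAt_of_tendsto hcont hder
    integrable_linear_exp.integrableOn htend
  rw [this]; ring

/-- Gaussian tail bound, right side. -/
lemma tail_bound_right {x : ℝ} (hx : 0 < x) :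
    ∫ t in Ioi x, rexp (-t^2/2) ≤ rexp (-x^2/2) / x := by
  have h1 : ∫ t in Ioi x, rexp (-t^2/2) ≤ ∫ t in Ioi x, (t/x) * rexp (-t^2/2) := by
    have hInt : Integrable (fun t : ℝ => (t/x) * rexp (-t^2/2)) := by
      refine (integrable_linear_exp.div_const x).congr ?_
      filter_upwards with t; ring
    apply setIntegral_mono_on integrable_exp_neg_half_sq.integrableOn
      hInt.integrableOn measurableSet_Ioi
    intro t ht
    have h2 : 1 ≤ t/x := (one_le_div hx).2 (le_of_lt ht)
    nlinarith [Real.exp_pos (-t^2/2)]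
  have h2 : ∫ t in Ioi x, (t/x) * rexp (-t^2/2) = (∫ t in Ioi x, t * rexp (-t^2/2)) / x := by
    rw [← integral_div]
    congr 1; funext t; ring
  rw [h2, tail_integral_linear] at h1
  exact h1

/-- Gaussian tail bound, left side. -/
lemma tail_bound_left {x : ℝ} (hx : x < 0) :
    ∫ t in Iic x, rexp (-t^2/2) ≤ rexp (-x^2/2) / (-x) := by
  have h1 : ∫ t in Iic x, rexp (-t^2/2) ≤ ∫ t in Iic x, (t/x) * rexp (-t^2/2) := by
    have hInt : Integrable (fun t : ℝ => (t/x) * rexp (-t^2/2)) := by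
      refine (integrable_linear_exp.div_const x).congr ?_
      filter_upwards with t; ring
    apply setIntegral_mono_on integrable_exp_neg_half_sq.integrableOn
      hInt.integrableOn measurableSet_Iic
    intro t ht
    have h2 : 1 ≤ t/x := by
      rw [le_div_iff_of_neg hx]
      simpa using ht
    nlinarith [Real.exp_pos (-t^2/2)]
  have h2 : ∫ t in Iic x, (t/x) * rexp (-t^2/2) = (∫ t in Iic x, t * rexp (-t^2/2)) / x := by
    rw [← integral_div]
    congr 1; funext t; ring
  rw [h2, tail_integral_linear_bot] at h1
  calc ∫ t in Iic x, rexp (-t^2/2) ≤ -rexp (-x^2/2) / x := h1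
    _ = rexp (-x^2/2) / (-x) := by ring

lemma abs_integral_le (μ : Measure ℝ) (h : ℝ → ℝ) : |∫ t, h t ∂μ| ≤ ∫ t, |h t| ∂μ := by
  rw [← Real.norm_eq_abs]
  refine (norm_integral_le_integral_norm _).trans_eq ?_
  simp [Real.norm_eq_abs]

lemma sqrt_two_pi_le_three : √(2*π) ≤ 3 := by
  rw [show (3:ℝ) = √9 by rw [show (9:ℝ) = 3^2 by norm_num, Real.sqrt_sq]; norm_num]
  apply Real.sqrt_le_sqrt
  nlinarith [Real.pi_le_four]

/-- Solution of the Stein equation with uniform bounds. -/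
lemma stein_solution (g : ℝ → ℝ) (hg : Continuous g) (hg01 : ∀ y, g y ∈ Icc (0:ℝ) 1) :
    ∃ f f' : ℝ → ℝ, (∀ y, HasDerivAt f (f' y) y) ∧ Continuous f' ∧
      (∀ y, |f y| ≤ 9) ∧ (∀ y, |f' y| ≤ 10) ∧
      (∀ y, f' y - y * f y = g y - ∫ t, g t ∂(gaussianReal 0 1)) := by
  set c : ℝ := ∫ t, g t ∂(gaussianReal 0 1) with hc
  have hgint : Integrable g (gaussianReal 0 1) := by
    refine (integrable_const (1:ℝ)).mono' hg.aestronglyMeasurable ?_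
    filter_upwards with t
    rw [Real.norm_eq_abs, abs_of_nonneg (hg01 t).1]
    exact (hg01 t).2
  have hc0 : 0 ≤ c := integral_nonneg (fun t => (hg01 t).1)
  have hc1 : c ≤ 1 := by
    rw [hc]
    calc ∫ t, g t ∂(gaussianReal 0 1) ≤ ∫ _t, (1:ℝ) ∂(gaussianReal 0 1) :=
          integral_mono hgint (integrable_const 1) (fun t => (hg01 t).2)
      _ = 1 := by simp
  set ψ : ℝ → ℝ := fun t => (g t - c) * rexp (-t^2/2) with hψ
  have hψc : Continuous ψ := by
    apply Continuous.mul (hg.sub continuous_const); continuity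
  have hψbd : ∀ t, |ψ t| ≤ rexp (-t^2/2) := by
    intro t
    rw [hψ]
    simp only [abs_mul, abs_of_pos (Real.exp_pos _)]
    have : |g t - c| ≤ 1 := by
      rw [abs_le]; constructor <;> [linarith [(hg01 t).1, hc1]; linarith [(hg01 t).2, hc0]]
    nlinarith [Real.exp_pos (-t^2/2)]
  have hψint : Integrable ψ := by
    refine integrable_exp_neg_half_sq.mono' hψc.aestronglyMeasurable ?_
    filter_upwards with t using by rw [Real.norm_eq_abs]; exact hψbd t
  -- total integral of ψ is zero
  have hgauss : ∫ t, g t * rexp (-t^2/2) = c * √(2*π) := by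
    have h1 : c = (√(2*π))⁻¹ * ∫ t, rexp (-t^2/2) * g t := by
      rw [hc, gauss_integral_eq, ← integral_const_mul]
      congr 1; funext t; rw [gaussianPDFReal_eq]; ring
    have hne : √(2*π) ≠ 0 := by positivity
    have h2 : ∫ t, rexp (-t^2/2) * g t = ∫ t, g t * rexp (-t^2/2) := by
      congr 1; funext t; ring
    rw [h2] at h1
    have hsp : √(2*π) = √2*√π := Real.sqrt_mul (by norm_num) π
    field_simp at h1
    rw [hsp]
    rw [← hsp]; simp only [neg_div] at h1 ⊢; linarith [h1]
  have htot : ∫ t, ψ t = 0 := by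
    have hsplit : ∫ t, ψ t = (∫ t, g t * rexp (-t^2/2)) - c * ∫ t, rexp (-t^2/2) := by
      rw [← integral_const_mul, ← integral_sub]
      · congr 1; funext t; rw [hψ]; ring
      · refine integrable_exp_neg_half_sq.mono' (hg.mul (by continuity)).aestronglyMeasurable ?_
        filter_upwards with t
        rw [Real.norm_eq_abs, abs_mul, abs_of_pos (Real.exp_pos _),
          abs_of_nonneg (hg01 t).1]
        nlinarith [Real.exp_pos (-t^2/2), (hg01 t).2, (hg01 t).1]
      · exact integrable_exp_neg_half_sq.const_mul c
    rw [hsplit, hgauss, integral_exp_neg_half_sq]; ring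
  set T : ℝ → ℝ := fun x => ∫ t in Iic x, ψ t with hT
  have hTd : ∀ x, HasDerivAt T (ψ x) x := by
    intro x
    have heq : T = fun y => (∫ t in Iic (0:ℝ), ψ t) + ∫ t in (0:ℝ)..y, ψ t := by
      funext y
      have h3 := intervalIntegral.integral_Iic_sub_Iic (hψint.integrableOn (s := Iic (0:ℝ)))
        (hψint.integrableOn (s := Iic y))
      rw [hT]
      simp only []
      linarith [h3]
    rw [heq]
    apply HasDerivAt.const_add
    apply intervalIntegral.integral_hasDerivAt_right
      hψint.intervalIntegrable
      (hψc.stronglyMeasurable.stronglyMeasurableAtFilter)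
      hψc.continuousAt
  have hTc : Continuous T := continuous_iff_continuousAt.2 fun x => (hTd x).continuousAt
  -- global bound on |T|
  have hTbd : ∀ x, |T x| ≤ √(2*π) := by
    intro x
    rw [hT]
    calc |∫ t in Iic x, ψ t| ≤ ∫ t in Iic x, |ψ t| := abs_integral_le _ _
      _ ≤ ∫ t in Iic x, rexp (-t^2/2) := by
          apply setIntegral_mono_on hψint.abs.integrableOn
            integrable_exp_neg_half_sq.integrableOn measurableSet_Iic
          intro t _; exact hψbd t
      _ ≤ ∫ t, rexp (-t^2/2) :=
          setIntegral_le_integral integrable_exp_neg_half_sq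
            (Filter.Eventually.of_forall fun t => (Real.exp_pos _).le)
      _ = √(2*π) := integral_exp_neg_half_sq
  -- tail representation for x > 0
  have hTtail : ∀ x, T x = -∫ t in Ioi x, ψ t := by
    intro x
    have := intervalIntegral.integral_Iic_add_Ioi (b := x) hψint.integrableOn hψint.integrableOn
    rw [htot] at this
    rw [hT]; linarith [this]
  have hTright : ∀ x, 0 < x → |T x| ≤ rexp (-x^2/2) / x := by
    intro x hx
    rw [hTtail x, abs_neg]
    calc |∫ t in Ioi x, ψ t| ≤ ∫ t in Ioi x, |ψ t| := abs_integral_le _ _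
      _ ≤ ∫ t in Ioi x, rexp (-t^2/2) := by
          apply setIntegral_mono_on hψint.abs.integrableOn
            integrable_exp_neg_half_sq.integrableOn measurableSet_Ioi
          intro t _; exact hψbd t
      _ ≤ rexp (-x^2/2) / x := tail_bound_right hx
  have hTleft : ∀ x, x < 0 → |T x| ≤ rexp (-x^2/2) / (-x) := by
    intro x hx
    rw [hT]
    calc |∫ t in Iic x, ψ t| ≤ ∫ t in Iic x, |ψ t| := abs_integral_le _ _
      _ ≤ ∫ t in Iic x, rexp (-t^2/2) := by
          apply setIntegral_mono_on hψint.abs.integrableOn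
            integrable_exp_neg_half_sq.integrableOn measurableSet_Iic
          intro t _; exact hψbd t
      _ ≤ rexp (-x^2/2) / (-x) := tail_bound_left hx
  have hexp1 : ∀ z : ℝ, rexp (z^2/2) * rexp (-z^2/2) = 1 := by
    intro z; rw [← Real.exp_add, show z^2/2 + -z^2/2 = 0 by ring, Real.exp_zero]
  -- the Stein solution
  set f : ℝ → ℝ := fun x => rexp (x^2/2) * T x with hf
  have hfd : ∀ x, HasDerivAt f (x * f x + (g x - c)) x := by
    intro x
    have h1 := (deriv_exp_pos_sq x).mul (hTd x)
    have h2 : rexp (x^2/2) * ψ x = g x - c := by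
      rw [hψ]
      simp only []
      calc rexp (x^2/2) * ((g x - c) * rexp (-x^2/2))
          = (g x - c) * (rexp (x^2/2) * rexp (-x^2/2)) := by ring
        _ = g x - c := by rw [hexp1]; ring
    rw [hf]
    refine h1.congr_deriv ?_
    simp only []
    rw [← h2]
    ring
  -- bounds
  have hfbd : ∀ x, |f x| ≤ 9 := by
    intro x
    rw [hf]
    simp only [abs_mul, abs_of_pos (Real.exp_pos _)]
    rcases le_or_gt (|x|) 1 with hx | hx
    · have h1 : rexp (x^2/2) ≤ rexp (1/2) := by
        apply Real.exp_le_exp.2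
        nlinarith [sq_abs x, mul_le_mul hx hx (abs_nonneg x) (by norm_num : (0:ℝ) ≤ 1)]
      have h2 : rexp (1/2) ≤ 3 := by
        calc rexp (1/2) ≤ rexp 1 := Real.exp_le_exp.2 (by norm_num)
          _ ≤ 3 := by linarith [Real.exp_one_lt_d9.le]
      calc rexp (x^2/2) * |T x| ≤ 3 * √(2*π) := by
            apply mul_le_mul (by linarith) (hTbd x) (abs_nonneg _) (by norm_num)
        _ ≤ 9 := by nlinarith [sqrt_two_pi_le_three]
    · rcases lt_or_ge x 0 with hneg | hpos
      · have hxn : x < 0 := hneg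
        have h1 := hTleft x hxn
        calc rexp (x^2/2) * |T x| ≤ rexp (x^2/2) * (rexp (-x^2/2) / (-x)) := by
              apply mul_le_mul_of_nonneg_left h1 (Real.exp_pos _).le
          _ = (rexp (x^2/2) * rexp (-x^2/2)) / (-x) := by ring
          _ = 1 / (-x) := by rw [hexp1]
          _ ≤ 9 := by
              rw [div_le_iff₀ (by linarith : (0:ℝ) < -x)]
              have : 1 < -x := by rw [abs_of_neg hxn] at hx; linarith
              nlinarith
      · have hxp : 0 < x := by
          rcases lt_or_eq_of_le hpos with h | h
          · exact h
          · exfalso; rw [← h] at hx; simp at hx; linarith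
        have h1 := hTright x hxp
        calc rexp (x^2/2) * |T x| ≤ rexp (x^2/2) * (rexp (-x^2/2) / x) := by
              apply mul_le_mul_of_nonneg_left h1 (Real.exp_pos _).le
          _ = (rexp (x^2/2) * rexp (-x^2/2)) / x := by ring
          _ = 1 / x := by rw [hexp1]
          _ ≤ 9 := by
              rw [div_le_iff₀ hxp]
              have : 1 < x := by rw [abs_of_pos hxp] at hx; linarith
              nlinarith
  have hxfbd : ∀ x, |x * f x| ≤ 9 := by
    intro x
    rcases le_or_gt (|x|) 1 with hx | hx
    · rw [abs_mul]
      calc |x| * |f x| ≤ 1 * 9 := by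
            apply mul_le_mul hx (hfbd x) (abs_nonneg _) (by norm_num)
        _ = 9 := by norm_num
    · rcases lt_or_ge x 0 with hneg | hpos
      · have h1 := hTleft x hneg
        rw [hf, abs_mul, abs_mul, abs_of_pos (Real.exp_pos _)]
        calc |x| * (rexp (x^2/2) * |T x|)
            ≤ |x| * (rexp (x^2/2) * (rexp (-x^2/2) / (-x))) := by
              apply mul_le_mul_of_nonneg_left _ (abs_nonneg x)
              apply mul_le_mul_of_nonneg_left h1 (Real.exp_pos _).le
          _ = (-x) * ((rexp (x^2/2) * rexp (-x^2/2)) / (-x)) := by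
              rw [abs_of_neg hneg]; ring
          _ = 1 := by
              rw [hexp1, mul_one_div, div_self (ne_of_gt (by linarith : (0:ℝ) < -x))]
          _ ≤ 9 := by norm_num
      · have hxp : 0 < x := by
          have h9 : (1:ℝ) < x := by rwa [abs_of_nonneg hpos] at hx
          linarith
        have h1 := hTright x hxp
        rw [hf, abs_mul, abs_mul, abs_of_pos (Real.exp_pos _)]
        calc |x| * (rexp (x^2/2) * |T x|)
            ≤ |x| * (rexp (x^2/2) * (rexp (-x^2/2) / x)) := by
              apply mul_le_mul_of_nonneg_left _ (abs_nonneg x)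
              apply mul_le_mul_of_nonneg_left h1 (Real.exp_pos _).le
          _ = x * ((rexp (x^2/2) * rexp (-x^2/2)) / x) := by
              rw [abs_of_pos hxp]; ring
          _ = 1 := by
              rw [hexp1, mul_one_div, div_self (ne_of_gt hxp)]
          _ ≤ 9 := by norm_num
  refine ⟨f, fun x => x * f x + (g x - c), hfd, ?_, hfbd, ?_, ?_⟩
  · have hfc : Continuous f := continuous_iff_continuousAt.2 fun x => (hfd x).continuousAt
    exact ((continuous_id.mul hfc).add (hg.sub continuous_const))
  · intro y
    have h1 : |g y - c| ≤ 1 := by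
      rw [abs_le]; constructor <;> [linarith [(hg01 y).1, hc1]; linarith [(hg01 y).2, hc0]]
    calc |y * f y + (g y - c)| ≤ |y * f y| + |g y - c| := abs_add_le _ _
      _ ≤ 9 + 1 := add_le_add (hxfbd y) h1
      _ = 10 := by norm_num
  · intro y; ring


def dTV' (μ ν : Measure ℝ) : ℝ :=
  ⨆ s : {s : Set ℝ // MeasurableSet s}, |(μ s).toReal - (ν s).toReal|

lemma integrable_of_bdd01 {μ : Measure ℝ} [IsFiniteMeasure μ] {g : ℝ → ℝ}
    (hg : Continuous g) (h01 : ∀ y, g y ∈ Icc (0:ℝ) 1) : Integrable g μ := by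
  refine (integrable_const (1:ℝ)).mono' hg.aestronglyMeasurable ?_
  filter_upwards with t
  rw [Real.norm_eq_abs, abs_of_nonneg (h01 t).1]
  exact (h01 t).2

lemma one_sided_bound (μ ν : Measure ℝ) [IsProbabilityMeasure μ] [IsProbabilityMeasure ν]
    (B : ℝ) (hB : 0 ≤ B)
    (h : ∀ g : ℝ → ℝ, Continuous g → (∀ y, g y ∈ Icc (0:ℝ) 1) →
      |(∫ y, g y ∂μ) - ∫ y, g y ∂ν| ≤ B)
    (s : Set ℝ) (hs : MeasurableSet s) :
    (μ s).toReal - (ν s).toReal ≤ B := by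
  refine le_of_forall_pos_le_add (fun ε hε => ?_)
  have hε2 : (0:ℝ) < ε/2 := by linarith
  have hεE : (ENNReal.ofReal (ε/2)) ≠ 0 := by
    simp [ENNReal.ofReal_eq_zero]; linarith
  -- inner approximation of s by a compact for μ
  obtain ⟨K, hKs, hKc, hKlt⟩ := hs.exists_isCompact_lt_add (measure_ne_top μ s) hεE
  -- outer approximation of K by an open set for ν
  obtain ⟨U, hKU, hUo, hUlt⟩ := Set.exists_isOpen_lt_of_lt K (ν K + ENNReal.ofReal (ε/2))
    (ENNReal.lt_add_right (measure_ne_top ν K) hεE)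
  -- Urysohn
  obtain ⟨g, hg0, hg1, hg01⟩ := exists_continuous_zero_one_of_isClosed
    hUo.isClosed_compl hKc.isClosed
    (disjoint_compl_left_iff.2 hKU)
  have hgc : Continuous g := g.continuous
  have h01 : ∀ y, g y ∈ Icc (0:ℝ) 1 := fun y => hg01 y
  -- μ s ≤ μ K + ε/2 in ℝ
  have h1 : (μ s).toReal ≤ (μ K).toReal + ε/2 := by
    have h3 := ENNReal.toReal_mono (by finiteness) hKlt.le
    rwa [ENNReal.toReal_add (measure_ne_top _ _) (by simp), ENNReal.toReal_ofReal hε2.le] at h3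
  -- μ K ≤ ∫ g dμ
  have h2 : (μ K).toReal ≤ ∫ y, g y ∂μ := by
    rw [← measureReal_def, ← integral_indicator_one hKc.measurableSet]
    apply integral_mono ((integrable_const (1:ℝ)).indicator hKc.measurableSet)
      (integrable_of_bdd01 hgc h01)
    intro y
    by_cases hy : y ∈ K
    · simp [Set.indicator_of_mem hy, hg1 hy]
    · simp only [Set.indicator_of_notMem hy]
      exact (h01 y).1
  -- ∫ g dν ≤ ν U
  have h3 : ∫ y, g y ∂ν ≤ (ν U).toReal := by
    rw [← measureReal_def, ← integral_indicator_one hUo.measurableSet]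
    apply integral_mono (integrable_of_bdd01 hgc h01)
      ((integrable_const (1:ℝ)).indicator hUo.measurableSet)
    intro y
    by_cases hy : y ∈ U
    · simp only [Set.indicator_of_mem hy, Pi.one_apply]
      exact (h01 y).2
    · have : g y = 0 := hg0 (by simpa using hy)
      simp [Set.indicator_of_notMem hy, this]
  -- ν U ≤ ν K + ε/2 ≤ ν s + ε/2  (K ⊆ s)
  have h4 : (ν U).toReal ≤ (ν s).toReal + ε/2 := by
    have h5 : ν U ≤ ν s + ENNReal.ofReal (ε/2) := by
      refine hUlt.le.trans ?_
      exact add_le_add (measure_mono hKs) le_rfl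
    have h6 := ENNReal.toReal_mono (by finiteness) h5
    rwa [ENNReal.toReal_add (measure_ne_top _ _) (by simp), ENNReal.toReal_ofReal hε2.le] at h6
  have h5 : (∫ y, g y ∂μ) - ∫ y, g y ∂ν ≤ B := (le_abs_self _).trans (h g hgc h01)
  linarith
  
lemma dTV'_le_of_testfun (μ ν : Measure ℝ) [IsProbabilityMeasure μ] [IsProbabilityMeasure ν]
    (B : ℝ) (hB : 0 ≤ B)
    (h : ∀ g : ℝ → ℝ, Continuous g → (∀ y, g y ∈ Icc (0:ℝ) 1) →
      |(∫ y, g y ∂μ) - ∫ y, g y ∂ν| ≤ B) :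
    dTV' μ ν ≤ B := by
  have hne : Nonempty {s : Set ℝ // MeasurableSet s} := ⟨⟨∅, MeasurableSet.empty⟩⟩
  refine ciSup_le (fun s => ?_)
  rw [abs_sub_le_iff]
  constructor
  · exact one_sided_bound μ ν B hB h s.1 s.2
  · refine one_sided_bound ν μ B hB ?_ s.1 s.2
    intro g hgc h01
    rw [abs_sub_comm]
    exact h g hgc h01

lemma int_abs_le_sqrt {α : Type*} [MeasurableSpace α] (μ : Measure α) [IsProbabilityMeasure μ]
    (H : α → ℝ) (hH : Integrable H μ) (hH2 : Integrable (fun x => (H x)^2) μ) :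
    ∫ x, |H x| ∂μ ≤ √(∫ x, (H x)^2 ∂μ) := by
  set A := ∫ x, |H x| ∂μ with hA
  have hA0 : 0 ≤ A := integral_nonneg (fun x => abs_nonneg _)
  have hkey : 0 ≤ ∫ x, (H x)^2 ∂μ - A^2 := by
    have hexp : ∫ x, (|H x| - A)^2 ∂μ = ∫ x, (H x)^2 ∂μ - A^2 := by
      have heq : (fun x => (|H x| - A)^2) = fun x => (H x)^2 - 2*A*|H x| + A^2 := by
        funext x; rw [sub_sq, sq_abs]; ring
      have hsub : Integrable (fun x => H x^2 - 2*A*|H x|) μ :=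
        hH2.sub (hH.abs.const_mul _)
      rw [heq, integral_add hsub (integrable_const _)]
      rw [integral_sub hH2 (hH.abs.const_mul _), integral_const]
      simp only [measureReal_def, measure_univ, ENNReal.toReal_one, one_smul, smul_eq_mul]
      rw [integral_const_mul]
      rw [← hA]; ring
    rw [← hexp]
    exact integral_nonneg (fun x => sq_nonneg _)
  rw [show A = √(A^2) by rw [Real.sqrt_sq hA0]]
  apply Real.sqrt_le_sqrt
  linarith

lemma dTV_le_of_testfun (μ ν : Measure ℝ) [IsProbabilityMeasure μ] [IsProbabilityMeasure ν]
    (B : ℝ) (hB : 0 ≤ B)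
    (h : ∀ g : ℝ → ℝ, Continuous g → (∀ y, g y ∈ Set.Icc (0:ℝ) 1) →
      |(∫ y, g y ∂μ) - ∫ y, g y ∂ν| ≤ B) :
    dTV μ ν ≤ B := by
  have hne : Nonempty {s : Set ℝ // MeasurableSet s} := ⟨⟨∅, MeasurableSet.empty⟩⟩
  refine ciSup_le (fun s => ?_)
  rw [abs_sub_le_iff]
  constructor
  · exact one_sided_bound μ ν B hB h s.1 s.2
  · refine one_sided_bound ν μ B hB ?_ s.1 s.2
    intro g hgc h01
    rw [abs_sub_comm]
    exact h g hgc h01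


/-- **Total variation bound on a fixed Wiener chaos (Malliavin–Stein).**
For every `k ≥ 1` there is `C_k > 0` such that for every `m ≥ 1` and every polynomial
`Q : ℝ^m → ℝ` satisfying the Ornstein–Uhlenbeck eigenfunction equation
`ΔQ(x) - ⟨x, ∇Q(x)⟩ = -k Q(x)` and `∫ Q² dγ_m = 1`, and every standard Gaussian
vector `N` in `ℝ^m`, `d_TV(Q(N), N(0,1)) ≤ C_k √(Var(|∇Q(N)|²))`. -/
theorem chaos_total_variation_bound (k : ℕ) (hk : 1 ≤ k) :
    ∃ C > (0 : ℝ),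
      ∀ (m : ℕ), 1 ≤ m →
      ∀ Q : MvPolynomial (Fin m) ℝ,
        (∀ x : Fin m → ℝ,
          (∑ i, MvPolynomial.eval x (MvPolynomial.pderiv i (MvPolynomial.pderiv i Q))) -
            (∑ i, x i * MvPolynomial.eval x (MvPolynomial.pderiv i Q))
          = -(k : ℝ) * MvPolynomial.eval x Q) →
        (∫ x : Fin m → ℝ, (MvPolynomial.eval x Q) ^ 2
            ∂(Measure.pi fun _ : Fin m => gaussianReal 0 1)) = 1 →
        ∀ {Ω : Type} [MeasurableSpace Ω] (P : Measure Ω) [IsProbabilityMeasure P]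
          (N : Ω → Fin m → ℝ), Measurable N →
          P.map N = (Measure.pi fun _ : Fin m => gaussianReal 0 1) →
          dTV (P.map fun ω => MvPolynomial.eval (N ω) Q) (gaussianReal 0 1)
            ≤ C * Real.sqrt
                (variance
                  (fun ω => ∑ i, (MvPolynomial.eval (N ω) (MvPolynomial.pderiv i Q)) ^ 2)
                  P) := by
  classical
  refine ⟨10, by norm_num, ?_⟩
  intro m hm Q heig hnorm Ω iΩ P iP N hN hNmap
  have hgm : (Measure.pi fun _ : Fin m => gaussianReal 0 1) = gm m := rfl
  rw [hgm] at hnorm hNmap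
  set F : (Fin m → ℝ) → ℝ := fun x => MvPolynomial.eval x Q with hF
  set G : (Fin m → ℝ) → ℝ :=
    fun x => ∑ i, (MvPolynomial.eval x (MvPolynomial.pderiv i Q))^2 with hG
  have hFc : Continuous F := MvPolynomial.continuous_eval Q
  have hGc : Continuous G := by
    apply continuous_finset_sum
    exact fun i _ => (MvPolynomial.continuous_eval _).pow 2
  -- the law of Q(N)
  have hlaw : P.map (fun ω => MvPolynomial.eval (N ω) Q) = (gm m).map F := by
    have h0 : (fun ω => MvPolynomial.eval (N ω) Q) = F ∘ N := rfl
    rw [h0, ← Measure.map_map hFc.measurable hN, hNmap]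
  haveI : IsProbabilityMeasure ((gm m).map F) :=
    Measure.isProbabilityMeasure_map hFc.measurable.aemeasurable
  -- G as a polynomial eval
  set S : MvPolynomial (Fin m) ℝ := ∑ i, (MvPolynomial.pderiv i Q)^2 with hS
  have hGeval : G = fun x => MvPolynomial.eval x S := by
    funext x
    rw [hG, hS, map_sum]
    exact Finset.sum_congr rfl (fun i _ => by rw [map_pow])
  have hGint : Integrable G (gm m) := by rw [hGeval]; exact integrable_eval _
  have hG2int : Integrable (fun x => (G x)^2) (gm m) := by
    have heq : (fun x => (G x)^2) = fun x => MvPolynomial.eval x (S^2) := by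
      funext x; rw [hGeval, map_pow]
    rw [heq]; exact integrable_eval _
  -- mean of G is k
  have hGmean : ∫ x, G x ∂(gm m) = (k:ℝ) := by
    rw [hGeval]
    have := eval_S_integral (m := m) k Q heig
    rw [show (fun x => MvPolynomial.eval x S) = fun x =>
      (∑ i, (MvPolynomial.eval x (MvPolynomial.pderiv i Q))^2) from by
        funext x; rw [hS, map_sum]; exact Finset.sum_congr rfl (fun i _ => by rw [map_pow])]
    rw [this, hnorm, mul_one]
  -- variance identity
  have hmemG : MeasureTheory.MemLp (fun ω => G (N ω)) 2 P := by
    refine (memLp_two_iff_integrable_sq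
      ((hGc.measurable.comp hN).aestronglyMeasurable)).2 ?_
    have h1 : Integrable (fun x => (G x)^2) (P.map N) := by rw [hNmap]; exact hG2int
    have h2 : Integrable ((fun x => (G x)^2) ∘ N) P :=
      (integrable_map_measure ((hGc.pow 2).measurable.aestronglyMeasurable)
        hN.aemeasurable).1 h1
    exact h2
  have hvar : variance (fun ω => ∑ i,
        (MvPolynomial.eval (N ω) (MvPolynomial.pderiv i Q))^2) P
      = ∫ x, ((k:ℝ) - G x)^2 ∂(gm m) := by
    have hXeq : (fun ω => ∑ i, (MvPolynomial.eval (N ω) (MvPolynomial.pderiv i Q))^2)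
        = fun ω => G (N ω) := rfl
    rw [hXeq, variance_eq_sub hmemG]
    have h1 : ∫ ω, ((fun ω => G (N ω))^2) ω ∂P = ∫ x, (G x)^2 ∂(gm m) := by
      simp only [Pi.pow_apply]
      rw [← hNmap, integral_map (f := fun x => (G x)^2) hN.aemeasurable ((hGc.pow 2).aestronglyMeasurable)]
    have h2 : ∫ ω, G (N ω) ∂P = (k:ℝ) := by
      rw [← hGmean, ← hNmap, integral_map hN.aemeasurable hGc.aestronglyMeasurable]
    rw [h1, h2]
    have hexp : (fun x => ((k:ℝ) - G x)^2)
        = fun x => (G x)^2 - (2*(k:ℝ))*(G x) + (k:ℝ)^2 := by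
      funext x; ring
    have hsub2 : Integrable (fun x => (G x)^2 - (2*(k:ℝ))*(G x)) (gm m) :=
      hG2int.sub (hGint.const_mul _)
    rw [hexp, integral_add hsub2 (integrable_const _),
      integral_sub hG2int (hGint.const_mul _), integral_const_mul, hGmean, integral_const]
    simp only [measureReal_def, measure_univ, ENNReal.toReal_one, smul_eq_mul, one_mul]
    ring
  rw [hlaw, hvar]
  -- Stein bound
  set V : ℝ := ∫ x, ((k:ℝ) - G x)^2 ∂(gm m) with hV
  have hkG_int : Integrable (fun x => (k:ℝ) - G x) (gm m) :=
    (integrable_const _).sub hGint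
  have hkG2_int : Integrable (fun x => ((k:ℝ) - G x)^2) (gm m) := by
    have hexp : (fun x => ((k:ℝ) - G x)^2)
        = fun x => (G x)^2 - (2*(k:ℝ))*(G x) + (k:ℝ)^2 := by
      funext x; ring
    rw [hexp]
    exact (hG2int.sub (hGint.const_mul _)).add (integrable_const _)
  have hV0 : 0 ≤ V := integral_nonneg (fun x => sq_nonneg _)
  apply dTV_le_of_testfun _ _ _ (by positivity)
  intro g hgc hg01
  obtain ⟨f, f', hfd, hf'c, hf9, hf'10, hsteq⟩ := stein_solution g hgc hg01
  have hfc : Continuous f := continuous_iff_continuousAt.2 fun y => (hfd y).continuousAt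
  set c : ℝ := ∫ t, g t ∂(gaussianReal 0 1) with hc
  have h1 : ∫ y, g y ∂((gm m).map F) = ∫ x, g (F x) ∂(gm m) :=
    integral_map hFc.measurable.aemeasurable hgc.aestronglyMeasurable
  -- integrabilities
  have hgF_int : Integrable (fun x => g (F x)) (gm m) := by
    refine (integrable_const (1:ℝ)).mono' (hgc.comp hFc).aestronglyMeasurable ?_
    filter_upwards with x
    rw [Real.norm_eq_abs, abs_of_nonneg (hg01 _).1]
    exact (hg01 _).2
  have hf'F_int : Integrable (fun x => f' (F x)) (gm m) := by
    refine (integrable_const (10:ℝ)).mono' (hf'c.comp hFc).aestronglyMeasurable ?_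
    filter_upwards with x
    rw [Real.norm_eq_abs]
    exact hf'10 _
  have hFfF_int : Integrable (fun x => F x * f (F x)) (gm m) := by
    have := integrable_poly_mul_bdd (m := m) Q (fun x => f (F x))
      (hfc.comp hFc) 9 (fun x => hf9 _)
    exact this
  have hGf'F_int : Integrable (fun x => G x * f' (F x)) (gm m) := by
    rw [hGeval]
    exact integrable_poly_mul_bdd S (fun x => f' (F x)) (hf'c.comp hFc) 10 (fun x => hf'10 _)
  -- the chaos identity
  have hkey : (k:ℝ) * ∫ x, F x * f (F x) ∂(gm m) = ∫ x, G x * f' (F x) ∂(gm m) := by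
    have := chaos_identity (m := m) k Q heig f f' hfd hf'c 9 10 (by norm_num) (by norm_num)
      hf9 hf'10
    exact this
  -- Stein equation under the integral
  have h2 : (∫ x, g (F x) ∂(gm m)) - c
      = (∫ x, f' (F x) ∂(gm m)) - ∫ x, F x * f (F x) ∂(gm m) := by
    have heqp : (fun x => f' (F x) - F x * f (F x)) = fun x => g (F x) - c := by
      funext x
      have := hsteq (F x)
      linarith
    rw [← integral_sub hf'F_int hFfF_int, heqp, integral_sub hgF_int (integrable_const c),
      integral_const]
    simp [measure_univ]
  -- final estimate
  have hmain : |(∫ y, g y ∂((gm m).map F)) - ∫ y, g y ∂(gaussianReal 0 1)| ≤ 10 * √V := by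
    rw [h1, ← hc, h2]
    have hE : (k:ℝ) * ((∫ x, f' (F x) ∂(gm m)) - ∫ x, F x * f (F x) ∂(gm m))
        = ∫ x, ((k:ℝ) - G x) * f' (F x) ∂(gm m) := by
      have hexp : (fun x => ((k:ℝ) - G x) * f' (F x))
          = fun x => (k:ℝ) * f' (F x) - G x * f' (F x) := by
        funext x; ring
      rw [hexp, integral_sub (hf'F_int.const_mul _) hGf'F_int, integral_const_mul, ← hkey]
      ring
    have habs : |∫ x, ((k:ℝ) - G x) * f' (F x) ∂(gm m)| ≤ 10 * √V := by
      calc |∫ x, ((k:ℝ) - G x) * f' (F x) ∂(gm m)|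
          ≤ ∫ x, |((k:ℝ) - G x) * f' (F x)| ∂(gm m) := by
            rw [← Real.norm_eq_abs]
            refine (norm_integral_le_integral_norm _).trans_eq ?_
            simp only [Real.norm_eq_abs]
        _ ≤ ∫ x, |(k:ℝ) - G x| * 10 ∂(gm m) := by
            have hprod_int : Integrable (fun x => ((k:ℝ) - G x) * f' (F x)) (gm m) := by
              have hexp : (fun x => ((k:ℝ) - G x) * f' (F x))
                  = fun x => (k:ℝ) * f' (F x) - G x * f' (F x) := by
                funext x; ring
              rw [hexp]
              exact (hf'F_int.const_mul _).sub hGf'F_int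
            apply integral_mono hprod_int.abs (hkG_int.abs.mul_const 10)
            intro x
            show |((k:ℝ) - G x) * f' (F x)| ≤ |(k:ℝ) - G x| * 10
            rw [abs_mul]
            exact mul_le_mul_of_nonneg_left (hf'10 _) (abs_nonneg _)
        _ = 10 * ∫ x, |(k:ℝ) - G x| ∂(gm m) := by
            rw [← integral_const_mul]
            congr 1; funext x; ring
        _ ≤ 10 * √V := by
            have := int_abs_le_sqrt (gm m) (fun x => (k:ℝ) - G x) hkG_int hkG2_int
            rw [hV]
            nlinarith [this, Real.sqrt_nonneg (∫ x, ((k:ℝ) - G x)^2 ∂(gm m))]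
    have hk1 : (1:ℝ) ≤ (k:ℝ) := by exact_mod_cast hk
    have hEabs : (k:ℝ) * |(∫ x, f' (F x) ∂(gm m)) - ∫ x, F x * f (F x) ∂(gm m)| ≤ 10 * √V := by
      rw [← abs_of_pos (by linarith : (0:ℝ) < (k:ℝ)), ← abs_mul, hE]
      exact habs
    calc |(∫ x, f' (F x) ∂(gm m)) - ∫ x, F x * f (F x) ∂(gm m)|
        ≤ (k:ℝ) * |(∫ x, f' (F x) ∂(gm m)) - ∫ x, F x * f (F x) ∂(gm m)| := by
          nlinarith [abs_nonneg ((∫ x, f' (F x) ∂(gm m)) - ∫ x, F x * f (F x) ∂(gm m))]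
      _ ≤ 10 * √V := hEabs
  exact hmain
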